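/- Let T be a positive self-adjoint trace-class operator with 0 ≤ T ≤ 1, eigenvalues (λ_n), and N = ⌈trace(T)⌉. Then trace(T) - trace(T²) ≤ (N - Σ_{n=1}^{N} λ_n) + (trace(T) - Σ_{n=1}^{N} λ_n), where λ_1 ≥ λ_2 ≥ ... are the eigenvalues in nonincreasing order. -/
import Mathlib


/-- Let `T` be a positive self-adjoint trace-class operator with `0 ≤ T ≤ 1`, with eigenvalues
`λ_1 ≥ λ_2 ≥ ⋯` in `[0,1]` (so `trace(T) = ∑ λ_n`, `trace(T²) = ∑ λ_n²`), and
`N = ⌈trace(T)⌉`. Then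
`trace(T) - trace(T²) ≤ (N - ∑_{n≤N} λ_n) + (trace(T) - ∑_{n≤N} λ_n)`. -/
theorem trace_sub_trace_sq_le (lam : ℕ → ℝ) (hmono : Antitone lam)
    (hmem : ∀ n, lam n ∈ Set.Icc (0 : ℝ) 1) (hsum : Summable lam) :
    (∑' n, lam n) - (∑' n, (lam n) ^ 2) ≤
      ((⌈∑' n, lam n⌉₊ : ℝ) - ∑ n ∈ Finset.range ⌈∑' n, lam n⌉₊, lam n) +
        ((∑' n, lam n) - ∑ n ∈ Finset.range ⌈∑' n, lam n⌉₊, lam n) := by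
  set N := ⌈∑' n, lam n⌉₊ with hN
  have hsq : Summable (fun n => (lam n) ^ 2) := by
    apply hsum.of_nonneg_of_le (fun n => sq_nonneg _)
    intro n
    have h := hmem n
    nlinarith [h.1, h.2]
  have hf : Summable (fun n => lam n - (lam n) ^ 2) := hsum.sub hsq
  have key : (∑' n, lam n) - (∑' n, (lam n) ^ 2) = ∑' n, (lam n - (lam n) ^ 2) :=
    (Summable.tsum_sub hsum hsq).symm
  rw [key]
  rw [← Summable.sum_add_tsum_nat_add (f := fun n => lam n - (lam n) ^ 2) N hf]
  have h1 : ∑ n ∈ Finset.range N, (lam n - (lam n) ^ 2) ≤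
      (N : ℝ) - ∑ n ∈ Finset.range N, lam n := by
    have : (N : ℝ) - ∑ n ∈ Finset.range N, lam n
        = ∑ n ∈ Finset.range N, (1 - lam n) := by
      rw [Finset.sum_sub_distrib, Finset.sum_const, Finset.card_range]
      simp
    rw [this]
    apply Finset.sum_le_sum
    intro i _
    have h := hmem i
    nlinarith [h.1, h.2]
  have h2 : (∑' n, (lam (n + N) - (lam (n + N)) ^ 2)) ≤
      (∑' n, lam n) - ∑ n ∈ Finset.range N, lam n := by
    have htail : (∑' n, lam n) - ∑ n ∈ Finset.range N, lam n = ∑' n, lam (n + N) := by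
      rw [← Summable.sum_add_tsum_nat_add N hsum]; ring
    rw [htail]
    apply Summable.tsum_le_tsum _ (hf.comp_injective (add_left_injective N))
      (hsum.comp_injective (add_left_injective N))
    intro n
    simp only [Function.comp_apply]
    nlinarith [(hmem (n + N)).1, sq_nonneg (lam (n + N))]
  linarith
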